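/- Let (γ_j)_{j≥1} be independent geometric random variables with P(γ_j = k) = (1 − q^j) q^{jk}, k ≥ 0, where 0 < q < 1. Then P(∑_{j≥1} j γ_j = n) = p(n) q^n ∏_{k≥1} (1 − q^k). -/

import Mathlib

/-!
The event `∑ j γ_j = n` is the disjoint union, over the partitions `p` of `n`, of the events
`γ_j = m_j(p)` for all `j`, where `m_j(p)` is the multiplicity of `j` in `p`. By independence and
continuity from above, the event attached to `p` has probability
`∏_j (1 - q^j) q^{j m_j(p)} = q^n ∏_j (1 - q^j)`, since `∑_j j m_j(p) = n`.
-/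

open MeasureTheory ProbabilityTheory
open scoped ENNReal

namespace Nat.Partition

variable {n : ℕ}

theorem count_pnat_injective :
    Function.Injective fun (p : n.Partition) (j : ℕ+) => p.parts.count (j : ℕ) := by
  intro p p' h
  ext m
  rcases Nat.eq_zero_or_pos m with rfl | hm
  · rw [Multiset.count_eq_zero.2 fun h => (p.parts_pos h).ne' rfl,
      Multiset.count_eq_zero.2 fun h => (p'.parts_pos h).ne' rfl]
  · exact congrFun h ⟨m, hm⟩

theorem exists_finset_count_eq_zero (p : n.Partition) :
    ∃ s : Finset ℕ+, ∀ j ∉ s, p.parts.count (j : ℕ) = 0 :=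
  ⟨p.parts.toFinset.subtype (0 < ·), fun _ hj =>
    Multiset.count_eq_zero.2 fun h => hj (Finset.mem_subtype.2 (Multiset.mem_toFinset.2 h))⟩

theorem sum_mul_count_of_count_eq_zero (p : n.Partition) {s : Finset ℕ+}
    (hs : ∀ j ∉ s, p.parts.count (j : ℕ) = 0) :
    ∑ j ∈ s, (j : ℕ) * p.parts.count (j : ℕ) = n := by
  have hsub : p.parts.toFinset ⊆ s.image (↑) := fun m hm => by
    have hm := Multiset.mem_toFinset.1 hm
    refine Finset.mem_image.2 ⟨⟨m, p.parts_pos hm⟩, ?_, rfl⟩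
    by_contra hns
    exact Multiset.count_ne_zero.2 hm (hs _ hns)
  conv_rhs => rw [← p.parts_sum, Finset.sum_multiset_count_of_subset _ _ hsub,
    Finset.sum_image fun a _ b _ h => PNat.coe_injective h]
  simp only [smul_eq_mul, mul_comm]

theorem hasProd_pow_mul_count {M : Type*} [CommMonoid M] [TopologicalSpace M]
    (p : n.Partition) (x : M) :
    HasProd (fun j : ℕ+ => x ^ ((j : ℕ) * p.parts.count (j : ℕ))) (x ^ n) := by
  obtain ⟨s, hs⟩ := p.exists_finset_count_eq_zero
  conv in x ^ n => rw [← p.sum_mul_count_of_count_eq_zero hs, ← Finset.prod_pow_eq_pow_sum]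
  exact hasProd_prod_of_ne_finset_one fun j hj => by rw [hs j hj, mul_zero, pow_zero]

theorem tsum_mul_count (p : n.Partition) :
    ∑' j : ℕ+, ((j : ℕ) : ℝ≥0∞) * (p.parts.count (j : ℕ) : ℝ≥0∞) = n := by
  obtain ⟨s, hs⟩ := p.exists_finset_count_eq_zero
  rw [tsum_eq_sum (s := s) fun j hj => by rw [hs j hj, Nat.cast_zero, mul_zero]]
  exact_mod_cast p.sum_mul_count_of_count_eq_zero hs

theorem exists_count_eq_of_tsum_mul_eq {g : ℕ+ → ℕ}
    (h : ∑' j : ℕ+, ((j : ℕ) : ℝ≥0∞) * (g j : ℝ≥0∞) = n) :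
    ∃ p : n.Partition, ∀ j : ℕ+, p.parts.count (j : ℕ) = g j := by
  have hle (j : ℕ+) : (j : ℕ) * g j ≤ n := by exact_mod_cast h ▸ ENNReal.le_tsum j
  have hfin : (Function.support g).Finite :=
    (Set.finite_Iic n).preimage PNat.coe_injective.injOn |>.subset fun j hj =>
      (Nat.le_mul_of_pos_right _ (Nat.pos_of_ne_zero hj)).trans (hle j)
  set m : Multiset ℕ := (Finsupp.ofSupportFinite g hfin).toMultiset.map (↑)
  have hcount (j : ℕ+) : m.count (j : ℕ) = g j := by
    rw [Multiset.count_map_eq_count' _ _ PNat.coe_injective, Finsupp.count_toMultiset,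
      Finsupp.ofSupportFinite_coe]
  have hpos {i : ℕ} (hi : i ∈ m) : 0 < i := by
    obtain ⟨j, -, rfl⟩ := Multiset.mem_map.1 hi
    exact j.pos
  -- `tsum_mul_count`, applied to `m` as a partition of `m.sum`, identifies `m.sum` with `n`.
  have hsum : m.sum = n := by
    have := (⟨m, hpos, rfl⟩ : Nat.Partition m.sum).tsum_mul_count
    simp only [hcount, h] at this
    exact_mod_cast this.symm
  exact ⟨⟨m, hpos, hsum⟩, hcount⟩

theorem tsum_mul_eq_iff_exists_count_eq {g : ℕ+ → ℕ} :
    ∑' j : ℕ+, ((j : ℕ) : ℝ≥0∞) * (g j : ℝ≥0∞) = n ↔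
      ∃ p : n.Partition, ∀ j : ℕ+, p.parts.count (j : ℕ) = g j := by
  refine ⟨exists_count_eq_of_tsum_mul_eq, ?_⟩
  rintro ⟨p, hp⟩
  simpa only [hp] using p.tsum_mul_count

variable {Ω : Type*} (γ : ℕ+ → Ω → ℕ)

theorem setOf_tsum_mul_eq_eq_iUnion :
    {ω | ∑' j : ℕ+, ((j : ℕ) : ℝ≥0∞) * (γ j ω : ℝ≥0∞) = n} =
      ⋃ p : n.Partition, ⋂ j, γ j ⁻¹' {p.parts.count (j : ℕ)} := by
  ext ω
  simp only [Set.mem_iUnion, Set.mem_iInter, Set.mem_preimage, Set.mem_singleton_iff]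
  exact tsum_mul_eq_iff_exists_count_eq.trans
    (exists_congr fun p => forall_congr' fun j => eq_comm)

theorem pairwise_disjoint_iInter_preimage_count :
    Pairwise (Function.onFun Disjoint
      fun p : n.Partition => ⋂ j, γ j ⁻¹' {p.parts.count (j : ℕ)}) :=
  fun _ _ hne => Set.disjoint_left.2 fun ω hp hp' => hne <|
    count_pnat_injective <| funext fun j => by
      simp only [Set.mem_iInter, Set.mem_preimage, Set.mem_singleton_iff] at hp hp'
      exact (hp j).symm.trans (hp' j)

end Nat.Partition

theorem ProbabilityTheory.iIndepFun.hasProd_measure_iInter_preimage {Ω ι : Type*}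
    [MeasurableSpace Ω] {μ : Measure Ω} [Countable ι] {β : ι → Type*}
    [∀ i, MeasurableSpace (β i)] {f : ∀ i, Ω → β i} (hf : iIndepFun f μ)
    (hmeas : ∀ i, Measurable (f i)) {s : ∀ i, Set (β i)} (hs : ∀ i, MeasurableSet (s i)) :
    HasProd (fun i => μ (f i ⁻¹' s i)) (μ (⋂ i, f i ⁻¹' s i)) := by
  have := hf.isProbabilityMeasure
  have hfin (S : Finset ι) : ∏ i ∈ S, μ (f i ⁻¹' s i) = μ (⋂ i ∈ S, f i ⁻¹' s i) :=
    (hf.meas_biInter fun i _ => ⟨s i, hs i, rfl⟩).symm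
  have hinter : ⋂ i, f i ⁻¹' s i = ⋂ S : Finset ι, ⋂ i ∈ S, f i ⁻¹' s i := by
    ext ω
    simp only [Set.mem_iInter]
    exact ⟨fun h S i _ => h i, fun h i => h {i} i (Finset.mem_singleton_self i)⟩
  simp only [HasProd, SummationFilter.unconditional_filter, hfin, hinter]
  exact tendsto_measure_iInter_atTop
    (fun S => (S.measurableSet_biInter fun i _ => hmeas i (hs i)).nullMeasurableSet)
    (fun S T hST => Set.biInter_subset_biInter_left hST) ⟨∅, measure_ne_top μ _⟩

theorem ENNReal.hasProd_ofReal {ι : Type*} {f : ι → ℝ} {a : ℝ} (hf : ∀ i, 0 ≤ f i)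
    (h : HasProd f a) : HasProd (fun i => ENNReal.ofReal (f i)) (ENNReal.ofReal a) :=
  ((ENNReal.continuous_ofReal.tendsto a).comp h).congr fun _ =>
    ENNReal.ofReal_prod_of_nonneg fun i _ => hf i

theorem Real.multipliable_one_sub_pow_pnat {q : ℝ} (hq0 : 0 ≤ q) (hq1 : q < 1) :
    Multipliable fun k : ℕ+ => 1 - q ^ (k : ℕ) := by
  simpa only [Function.comp_apply, ← sub_eq_add_neg] using Real.multipliable_one_add_of_summable
    ((summable_geometric_of_lt_one hq0 hq1).comp_injective PNat.coe_injective).neg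

theorem prob_weighted_sum_eq_general
    (q : ℝ) (hq0 : 0 < q) (hq1 : q < 1)
    {Ω : Type*} [MeasurableSpace Ω] (μ : Measure Ω)
    (γ : ℕ+ → Ω → ℕ) (hmeas : ∀ j, Measurable (γ j))
    (hindep : iIndepFun γ μ)
    (hdist : ∀ (j : ℕ+) (k : ℕ),
      μ {ω | γ j ω = k} = ENNReal.ofReal ((1 - q ^ (j : ℕ)) * q ^ ((j : ℕ) * k)))
    (n : ℕ) :
    μ {ω | ∑' j : ℕ+, ((j : ℕ) : ℝ≥0∞) * (γ j ω : ℝ≥0∞) = (n : ℝ≥0∞)}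
      = ENNReal.ofReal ((Fintype.card (Nat.Partition n) : ℝ) * q ^ n *
          ∏' k : ℕ+, (1 - q ^ (k : ℕ))) := by
  have hatom (p : n.Partition) : μ (⋂ j, γ j ⁻¹' {p.parts.count (j : ℕ)}) =
      ENNReal.ofReal (q ^ n * ∏' k : ℕ+, (1 - q ^ (k : ℕ))) := by
    refine (hindep.hasProd_measure_iInter_preimage hmeas
      fun _ => measurableSet_singleton _).unique ?_
    simp only [Set.preimage, Set.mem_singleton_iff, hdist]
    refine ENNReal.hasProd_ofReal (fun j => mul_nonneg ?_ (by positivity)) ?_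
    · exact sub_nonneg.2 (pow_le_one₀ hq0.le hq1.le)
    · simpa only [mul_comm] using
        (Real.multipliable_one_sub_pow_pnat hq0.le hq1).hasProd.mul (p.hasProd_pow_mul_count q)
  rw [Nat.Partition.setOf_tsum_mul_eq_eq_iUnion,
    measure_iUnion (Nat.Partition.pairwise_disjoint_iInter_preimage_count γ)
      fun p => .iInter fun j => hmeas j (measurableSet_singleton _),
    tsum_fintype, Finset.sum_congr rfl fun p _ => hatom p, Finset.sum_const, Finset.card_univ,
    nsmul_eq_mul, ← ENNReal.ofReal_natCast, ← ENNReal.ofReal_mul (by positivity), mul_assoc]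

/-- For independent geometric variables `γ_j` with `P(γ_j = k) = (1 − qʲ)q^{jk}`,
`P(∑_{j≥1} j γ_j = n) = p(n) qⁿ ∏_{k≥1}(1 − q^k)`. -/
theorem prob_weighted_sum_eq
    (q : ℝ) (hq0 : 0 < q) (hq1 : q < 1)
    {Ω : Type*} [MeasurableSpace Ω] (μ : Measure Ω) [IsProbabilityMeasure μ]
    (γ : ℕ+ → Ω → ℕ) (hmeas : ∀ j, Measurable (γ j))
    (hindep : iIndepFun γ μ)
    (hdist : ∀ (j : ℕ+) (k : ℕ),
      μ {ω | γ j ω = k} = ENNReal.ofReal ((1 - q ^ (j : ℕ)) * q ^ ((j : ℕ) * k)))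
    (n : ℕ) :
    μ {ω | ∑' j : ℕ+, ((j : ℕ) : ℝ≥0∞) * (γ j ω : ℝ≥0∞) = (n : ℝ≥0∞)}
      = ENNReal.ofReal ((Fintype.card (Nat.Partition n) : ℝ) * q ^ n *
          ∏' k : ℕ+, (1 - q ^ (k : ℕ))) :=
  prob_weighted_sum_eq_general q hq0 hq1 μ γ hmeas hindep hdist n
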